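/- Let L_i = ⟨(η_i, ξ_i); T_i, I_i, F_i⟩ for i = 1,…,n be FNNNs with η_i, ξ_i > 0 and ω_i ≥ 0, Σω_i = 1. Define L^{ω} = ⟨(η^{ω}, ξ^{ω}); T^{ω}, (1-(1-I^{Λ})^{ω})^{1/Λ}, (1-(1-F^{3Λ})^{ω})^{1/(3Λ)}⟩ and product L₁ ⊠ L₂ = ⟨(η₁η₂, ξ₁ξ₂); T₁T₂, (I₁^{Λ}+I₂^{Λ}-I₁^{Λ}I₂^{Λ})^{1/Λ}, (F₁^{3Λ}+F₂^{3Λ}-F₁^{3Λ}F₂^{3Λ})^{1/(3Λ)}⟩. Then Πᵢ L_i^{ω_i} = ⟨(Π η_i^{ω_i}, Π ξ_i^{ω_i}); Π T_i^{ω_i}, (1 - Πᵢ(1-I_i^{Λ})^{ω_i})^{1/Λ}, (1 - Πᵢ(1-F_i^{3Λ})^{ω_i})^{1/(3Λ)}⟩. -/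

import Mathlib

/-! In the coordinates `(η, ξ, T, 1 - I^Λ, 1 - F^{3Λ})` both the weighted power and the product of
FNNNs become coordinatewise (the product because `x + y - x y = 1 - (1 - x)(1 - y)`), so the
weighted geometric mean is the coordinatewise product of the weighted powers. -/

structure FNNN where
  eta : ℝ
  xi : ℝ
  T : ℝ
  I : ℝ
  F : ℝ

noncomputable def FNNN.mul (Λ : ℕ) (L₁ L₂ : FNNN) : FNNN :=
  ⟨L₁.eta * L₂.eta, L₁.xi * L₂.xi,
    L₁.T * L₂.T,
    (L₁.I ^ Λ + L₂.I ^ Λ - L₁.I ^ Λ * L₂.I ^ Λ) ^ (1 / (Λ:ℝ)),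
    (L₁.F ^ (3*Λ) + L₂.F ^ (3*Λ) - L₁.F ^ (3*Λ) * L₂.F ^ (3*Λ)) ^ (1 / (3 * (Λ:ℝ)))⟩

noncomputable def FNNN.wpow (Λ : ℕ) (w : ℝ) (L : FNNN) : FNNN :=
  ⟨L.eta ^ w, L.xi ^ w,
    L.T ^ w,
    (1 - (1 - L.I ^ Λ) ^ w) ^ (1 / (Λ:ℝ)),
    (1 - (1 - L.F ^ (3*Λ)) ^ w) ^ (1 / (3 * (Λ:ℝ)))⟩

namespace FNNN

noncomputable def ofMulCoords (Λ : ℕ) (η ξ T a b : ℝ) : FNNN :=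
  ⟨η, ξ, T, (1 - a) ^ (1 / (Λ:ℝ)), (1 - b) ^ (1 / (3 * (Λ:ℝ)))⟩

lemma one_div_rpow_pow {x : ℝ} (hx : 0 ≤ x) {m : ℕ} (hm : m ≠ 0) :
    (x ^ (1 / (m:ℝ))) ^ m = x := by
  rw [one_div, Real.rpow_inv_natCast_pow hx hm]

lemma mul_ofMulCoords {Λ : ℕ} (hΛ : Λ ≠ 0) (η ξ T η' ξ' T' : ℝ) {a b a' b' : ℝ}
    (ha : a ≤ 1) (hb : b ≤ 1) (ha' : a' ≤ 1) (hb' : b' ≤ 1) :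
    mul Λ (ofMulCoords Λ η ξ T a b) (ofMulCoords Λ η' ξ' T' a' b')
      = ofMulCoords Λ (η * η') (ξ * ξ') (T * T') (a * a') (b * b') := by
  have h3Λ : 3 * (Λ:ℝ) = ((3 * Λ : ℕ) : ℝ) := by push_cast; rfl
  simp only [mul, ofMulCoords, mk.injEq, true_and]
  rw [h3Λ, one_div_rpow_pow (sub_nonneg.2 ha) hΛ, one_div_rpow_pow (sub_nonneg.2 ha') hΛ,
    one_div_rpow_pow (sub_nonneg.2 hb) (by omega), one_div_rpow_pow (sub_nonneg.2 hb') (by omega)]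
  constructor <;> congr 1 <;> ring

lemma wpow_eq_ofMulCoords (Λ : ℕ) (w : ℝ) (L : FNNN) :
    wpow Λ w L = ofMulCoords Λ (L.eta ^ w) (L.xi ^ w) (L.T ^ w)
      ((1 - L.I ^ Λ) ^ w) ((1 - L.F ^ (3 * Λ)) ^ w) :=
  rfl

lemma foldl_mul_ofFn_ofMulCoords {Λ : ℕ} (hΛ : Λ ≠ 0) {n : ℕ} (η ξ T a b : Fin (n+1) → ℝ)
    (ha : ∀ i, a i ∈ Set.Icc (0:ℝ) 1) (hb : ∀ i, b i ∈ Set.Icc (0:ℝ) 1) :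
    (List.ofFn fun i : Fin n => ofMulCoords Λ (η i.succ) (ξ i.succ) (T i.succ) (a i.succ)
        (b i.succ)).foldl (mul Λ) (ofMulCoords Λ (η 0) (ξ 0) (T 0) (a 0) (b 0))
      = ofMulCoords Λ (∏ i, η i) (∏ i, ξ i) (∏ i, T i) (∏ i, a i) (∏ i, b i) := by
  induction n with
  | zero => simp
  | succ n ih =>
    have prod_le_one {c : Fin (n+1) → ℝ} (hc : ∀ i, c i ∈ Set.Icc (0:ℝ) 1) : ∏ i, c i ≤ 1 :=
      Finset.prod_le_one (fun i _ => (hc i).1) (fun i _ => (hc i).2)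
    rw [List.ofFn_succ', List.concat_eq_append, List.foldl_append]
    have hprefix := ih (η ∘ Fin.castSucc) (ξ ∘ Fin.castSucc) (T ∘ Fin.castSucc) (a ∘ Fin.castSucc)
      (b ∘ Fin.castSucc) (fun i => ha _) (fun i => hb _)
    simp only [Function.comp_apply, Fin.castSucc_zero] at hprefix
    simp only [Fin.succ_castSucc, hprefix, List.foldl_cons, List.foldl_nil, Fin.succ_last]
    rw [mul_ofMulCoords hΛ _ _ _ _ _ _ (prod_le_one fun i => ha _) (prod_le_one fun i => hb _)
      (ha _).2 (hb _).2]
    simp only [Fin.prod_univ_castSucc]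

lemma one_sub_pow_rpow_mem_Icc {x : ℝ} (hx : x ∈ Set.Icc (0:ℝ) 1) (m : ℕ) {w : ℝ} (hw : 0 ≤ w) :
    (1 - x ^ m) ^ w ∈ Set.Icc (0:ℝ) 1 := by
  have hxm : x ^ m ∈ Set.Icc (0:ℝ) 1 := ⟨pow_nonneg hx.1 m, pow_le_one₀ hx.1 hx.2⟩
  exact ⟨Real.rpow_nonneg (sub_nonneg.2 hxm.2) w,
    Real.rpow_le_one (sub_nonneg.2 hxm.2) (sub_le_self 1 hxm.1) hw⟩

end FNNN

theorem fnnwg_closed_form_general (Λ : ℕ) (hΛ : 0 < Λ) (n : ℕ)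
    (L : Fin (n+1) → FNNN) (ω : Fin (n+1) → ℝ)
    (hI : ∀ i, (L i).I ∈ Set.Icc (0:ℝ) 1)
    (hF : ∀ i, (L i).F ∈ Set.Icc (0:ℝ) 1)
    (hω : ∀ i, 0 ≤ ω i) :
    (List.ofFn (fun i : Fin n => FNNN.wpow Λ (ω i.succ) (L i.succ))).foldl
        (FNNN.mul Λ) (FNNN.wpow Λ (ω 0) (L 0))
      = ⟨∏ i, (L i).eta ^ (ω i), ∏ i, (L i).xi ^ (ω i),
          ∏ i, (L i).T ^ (ω i),
          (1 - ∏ i, (1 - (L i).I ^ Λ) ^ (ω i)) ^ (1 / (Λ:ℝ)),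
          (1 - ∏ i, (1 - (L i).F ^ (3*Λ)) ^ (ω i)) ^ (1 / (3 * (Λ:ℝ)))⟩ := by
  simp only [FNNN.wpow_eq_ofMulCoords]
  exact FNNN.foldl_mul_ofFn_ofMulCoords hΛ.ne' (fun i => (L i).eta ^ ω i) (fun i => (L i).xi ^ ω i)
    (fun i => (L i).T ^ ω i) _ _
    (fun i => FNNN.one_sub_pow_rpow_mem_Icc (hI i) Λ (hω i))
    (fun i => FNNN.one_sub_pow_rpow_mem_Icc (hF i) (3 * Λ) (hω i))

theorem fnnwg_closed_form (Λ : ℕ) (hΛ : 0 < Λ) (n : ℕ)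
    (L : Fin (n+1) → FNNN) (ω : Fin (n+1) → ℝ)
    (hη : ∀ i, 0 < (L i).eta) (hξ : ∀ i, 0 < (L i).xi)
    (hT : ∀ i, (L i).T ∈ Set.Icc (0:ℝ) 1) (hI : ∀ i, (L i).I ∈ Set.Icc (0:ℝ) 1)
    (hF : ∀ i, (L i).F ∈ Set.Icc (0:ℝ) 1)
    (hω : ∀ i, 0 ≤ ω i) (hωs : ∑ i, ω i = 1) :
    (List.ofFn (fun i : Fin n => FNNN.wpow Λ (ω i.succ) (L i.succ))).foldl
        (FNNN.mul Λ) (FNNN.wpow Λ (ω 0) (L 0))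
      = ⟨∏ i, (L i).eta ^ (ω i), ∏ i, (L i).xi ^ (ω i),
          ∏ i, (L i).T ^ (ω i),
          (1 - ∏ i, (1 - (L i).I ^ Λ) ^ (ω i)) ^ (1 / (Λ:ℝ)),
          (1 - ∏ i, (1 - (L i).F ^ (3*Λ)) ^ (ω i)) ^ (1 / (3 * (Λ:ℝ)))⟩ :=
  fnnwg_closed_form_general Λ hΛ n L ω hI hF hω
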